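/- Let m be a positive integer and p a prime with p ≡ 1 (mod 2m). Then (∏_{1 ≤ a ≤ (p²−1)/m, p ∤ a} a)^(p−1) ≡ (∏_{1 ≤ a ≤ (p²−1)/(2m), p ∤ a} a)^(2(p−1)) (mod p²) if and only if the rational number B_p(1/m) − 2^p·B_p(1/(2m)) is congruent to 0 modulo p³, i.e. it can be written as p³·(a/b) with integers a, b and p ∤ b. -/

import Mathlib

/-!
Write `p = 2mk + 1`, so that `(p² - 1)/(2m) = N := k(p + 1)` and `(p² - 1)/m = 2N`, and let
`T(M) = ∑_{a ≤ M} a^(p-1)`.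

Modulo `p²`, every `a^(p-1)` with `p ∤ a` is `1 + p q(a)` with `q` the Fermat quotient, and such
factors multiply to `1 + p ∑ q(a)`; comparing with `T(M)` shows that the congruence between the
Gauss factorials says exactly `T(2N) ≡ 2 T(N) (mod p²)`.

For the Bernoulli side, `B_p(x + M) - B_p(x) = p ∑_{j<M} (x + j)^(p-1)` with `1/c + M = p²/c` and
`(p²/c - a)^(p-1) ≡ a^(p-1) (mod p²)` give `B_p(1/c) ≡ B_p(p²/c) - p T(M) (mod p³)`. Because `B_i`
(`i < p - 1`) and `p B_{p-1}` are `p`-integral, `B_p(p² y) ≡ p B_{p-1} · p² y (mod p³)`, so Fermat's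
`2^p ≡ 2 (mod p)` gives `B_p(p²/m) ≡ 2^p B_p(p²/(2m)) (mod p³)`. Using also `p ∣ T(N)`, this yields
`B_p(1/m) - 2^p B_p(1/(2m)) ≡ p (2 T(N) - T(2N)) (mod p³)`.

A rational `x` is `≡ 0 (mod p^k)` when `padicValuation p x ≤ padicValuation p p ^ k`.
-/

open Finset Rat

lemma Valuation.map_pow_sub_pow_le {R Γ₀ : Type*} [CommRing R] [LinearOrderedCommGroupWithZero Γ₀]
    (v : Valuation R Γ₀) {x y : R} (hx : v x ≤ 1) (hy : v y ≤ 1) (n : ℕ) :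
    v (x ^ n - y ^ n) ≤ v (x - y) := by
  rw [← geom_sum₂_mul, map_mul]
  refine mul_le_of_le_one_left' (v.map_sum_le fun i _ => ?_)
  rw [map_mul, map_pow, map_pow]
  exact mul_le_one' (pow_le_one' hx _) (pow_le_one' hy _)

lemma Valuation.map_le_iff_of_map_sub_le {R Γ₀ : Type*} [Ring R]
    [LinearOrderedCommMonoidWithZero Γ₀] (v : Valuation R Γ₀) {x y : R} {g : Γ₀} (h : v (x - y) ≤ g) : v x ≤ g ↔ v y ≤ g :=
  ⟨fun hx => by simpa using v.map_sub_le hx h, fun hy => by simpa using v.map_add_le h hy⟩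

lemma prod_one_add_mul_of_sq_eq_zero {ι R : Type*} [CommRing R] {ε : R} (hε : ε ^ 2 = 0)
    (s : Finset ι) (f : ι → R) : ∏ i ∈ s, (1 + ε * f i) = 1 + ε * ∑ i ∈ s, f i := by
  classical
  induction s using Finset.induction_on with
  | empty => simp
  | insert a s ha ih =>
    rw [prod_insert ha, sum_insert ha, ih]
    linear_combination (f a * ∑ i ∈ s, f i) * hε

lemma Polynomial.bernoulli_eval_eq_sum (n : ℕ) (x : ℚ) :
    (bernoulli n).eval x = ∑ i ∈ range (n + 1), _root_.bernoulli i * n.choose i * x ^ (n - i) := by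
  simp [bernoulli, eval_finsetSum]

lemma Polynomial.bernoulli_eval_add_natCast (n : ℕ) (x : ℚ) (N : ℕ) :
    (bernoulli n).eval (x + N) = (bernoulli n).eval x + n * ∑ j ∈ range N, (x + j) ^ (n - 1) := by
  induction N with
  | zero => simp
  | succ N ih =>
    rw [Nat.cast_succ, ← add_assoc, add_comm _ (1 : ℚ), bernoulli_eval_one_add, ih, sum_range_succ]
    ring

lemma natCast_succ_mul_bernoulli {k : ℕ} (hk : k ≠ 0) :
    ((k + 1 : ℕ) : ℚ) * bernoulli k = -∑ i ∈ range k, ((k + 1).choose i : ℚ) * bernoulli i := by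
  have h := sum_bernoulli (k + 1)
  rw [if_neg (by omega), sum_range_succ, Nat.choose_succ_self_right] at h
  linarith

lemma one_div_add_natCast_eq_div {c N n : ℕ} (hc : c ≠ 0) (hN : c * N + 1 = n) :
    1 / (c : ℚ) + N = n / c := by
  rw [← hN]
  push_cast
  field_simp
  ring

lemma sub_one_div_eq_of_mul_add_one_eq {c N n : ℕ} (hc : 0 < c) (hN : c * N + 1 = n) :
    (n - 1) / c = N := by
  rw [← hN, Nat.add_sub_cancel, Nat.mul_div_cancel_left _ hc]

lemma mul_add_one_div_self {k p : ℕ} (hk : k < p) : k * (p + 1) / p = k := by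
  rw [mul_add_one, mul_comm, Nat.mul_add_div (by omega), Nat.div_eq_of_lt hk, add_zero]

lemma ZMod.natCast_sq_eq_zero (n : ℕ) : (n : ZMod (n ^ 2)) ^ 2 = 0 := by
  exact_mod_cast ZMod.natCast_self (n ^ 2)

lemma card_filter_not_dvd_Icc (p N : ℕ) : #{a ∈ Icc 1 N | ¬ p ∣ a} = N - N / p := by
  have h := card_filter_add_card_filter_not (s := Icc 1 N) (fun a => p ∣ a)
  have hdvd := Nat.Ioc_filter_dvd_card_eq_div N p
  rw [← Icc_add_one_left_eq_Ioc, zero_add] at hdvd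
  rw [Nat.card_Icc] at h
  omega

def fermatQuotient (p a : ℕ) : ℕ := (a ^ (p - 1) - 1) / p

lemma pow_eq_one_add_mul_fermatQuotient {p a : ℕ} (hp : p.Prime) (ha : ¬ p ∣ a) :
    a ^ (p - 1) = 1 + p * fermatQuotient p a := by
  have hpos : 1 ≤ a ^ (p - 1) := Nat.one_le_pow _ _ (Nat.pos_of_ne_zero (by rintro rfl; simp at ha))
  have hcop : a.Coprime p := Nat.coprime_comm.mp (hp.coprime_iff_not_dvd.mpr ha)
  have hdvd : p ∣ a ^ (p - 1) - 1 :=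
    (Nat.modEq_iff_dvd' hpos).mp (Nat.ModEq.pow_card_sub_one_eq_one hp hcop).symm
  rw [fermatQuotient, Nat.mul_div_cancel' hdvd]
  omega

section GaussFactorial

variable {p : ℕ} [hp : Fact p.Prime]

lemma prod_pow_eq_one_add_mul_sum_fermatQuotient {s : Finset ℕ} (hs : ∀ a ∈ s, ¬ p ∣ a) :
    ((∏ a ∈ s, a : ℕ) : ZMod (p ^ 2)) ^ (p - 1)
      = 1 + p * ∑ a ∈ s, (fermatQuotient p a : ZMod (p ^ 2)) := by
  rw [← prod_one_add_mul_of_sq_eq_zero (ZMod.natCast_sq_eq_zero p), Nat.cast_prod, ← prod_pow]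
  refine prod_congr rfl fun a ha => ?_
  rw [← Nat.cast_pow, pow_eq_one_add_mul_fermatQuotient hp.out (hs a ha)]
  push_cast
  rfl

lemma sum_pow_eq_card_add_mul_sum_fermatQuotient (hp2 : p ≠ 2) (N : ℕ) :
    ((∑ a ∈ Icc 1 N, a ^ (p - 1) : ℕ) : ZMod (p ^ 2))
      = (N - N / p : ℕ) + p * ∑ a ∈ Icc 1 N with ¬ p ∣ a, (fermatQuotient p a : ZMod (p ^ 2)) := by
  have hp3 : 2 ≤ p - 1 := by have := hp.out.two_le; omega
  have hmultiples : ((∑ a ∈ Icc 1 N with p ∣ a, a ^ (p - 1) : ℕ) : ZMod (p ^ 2)) = 0 := by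
    push_cast
    refine sum_eq_zero fun a ha => ?_
    obtain ⟨b, rfl⟩ := (mem_filter.mp ha).2
    rw [Nat.cast_mul, mul_pow, ← Nat.sub_add_cancel hp3, pow_add, ZMod.natCast_sq_eq_zero]
    simp
  have hunits : ((∑ a ∈ Icc 1 N with ¬ p ∣ a, a ^ (p - 1) : ℕ) : ZMod (p ^ 2))
      = #{a ∈ Icc 1 N | ¬ p ∣ a}
        + p * ∑ a ∈ Icc 1 N with ¬ p ∣ a, (fermatQuotient p a : ZMod (p ^ 2)) := by
    rw [sum_congr rfl fun a ha => pow_eq_one_add_mul_fermatQuotient hp.out (mem_filter.mp ha).2]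
    push_cast [sum_add_distrib, mul_sum]
    simp
  rw [← sum_filter_add_sum_filter_not _ (fun a => p ∣ a), Nat.cast_add, hmultiples, hunits,
    zero_add, card_filter_not_dvd_Icc]

lemma prime_dvd_sum_pow (hp2 : p ≠ 2) {N : ℕ} (hN : p ∣ N - N / p) :
    p ∣ ∑ a ∈ Icc 1 N, a ^ (p - 1) := by
  have h := congrArg (ZMod.castHom (dvd_pow_self p two_ne_zero) (ZMod p))
    (sum_pow_eq_card_add_mul_sum_fermatQuotient hp2 N)
  simp only [map_add, map_mul, map_natCast, (ZMod.natCast_eq_zero_iff _ p).mpr hN,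
    ZMod.natCast_self, zero_mul, add_zero] at h
  exact (ZMod.natCast_eq_zero_iff _ p).mp h

lemma gaussFactorial_pow_modEq_iff (hp2 : p ≠ 2) {N : ℕ} (hN : 2 * N / p = 2 * (N / p)) :
    (∏ a ∈ Icc 1 (2 * N) with ¬ p ∣ a, a) ^ (p - 1)
        ≡ (∏ a ∈ Icc 1 N with ¬ p ∣ a, a) ^ (2 * (p - 1)) [MOD p ^ 2]
      ↔ ∑ a ∈ Icc 1 (2 * N), a ^ (p - 1) ≡ 2 * ∑ a ∈ Icc 1 N, a ^ (p - 1) [MOD p ^ 2] := by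
  have hcard : 2 * N - 2 * N / p = 2 * (N - N / p) := by omega
  rw [← ZMod.natCast_eq_natCast_iff, ← ZMod.natCast_eq_natCast_iff, Nat.cast_pow, Nat.cast_pow,
    mul_comm 2 (p - 1), pow_mul,
    prod_pow_eq_one_add_mul_sum_fermatQuotient fun a ha => (mem_filter.mp ha).2,
    prod_pow_eq_one_add_mul_sum_fermatQuotient fun a ha => (mem_filter.mp ha).2, Nat.cast_mul,
    sum_pow_eq_card_add_mul_sum_fermatQuotient hp2, sum_pow_eq_card_add_mul_sum_fermatQuotient hp2,
    hcard, Nat.cast_mul]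
  set X₁ := ∑ a ∈ Icc 1 (2 * N) with ¬ p ∣ a, (fermatQuotient p a : ZMod (p ^ 2))
  set X₂ := ∑ a ∈ Icc 1 N with ¬ p ∣ a, (fermatQuotient p a : ZMod (p ^ 2))
  have hsq : (1 + p * X₂) ^ 2 = 1 + 2 * (p * X₂) := by
    linear_combination X₂ ^ 2 * ZMod.natCast_sq_eq_zero p
  rw [hsq]
  push_cast
  constructor <;> intro h <;> linear_combination h

end GaussFactorial

section PadicValuation

variable {p : ℕ} [hp : Fact p.Prime]

lemma Rat.padicValuation_natCast_le_one (n : ℕ) : padicValuation p n ≤ 1 := by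
  exact_mod_cast Int.padicValuation_le_one p n

lemma Rat.padicValuation_natCast_eq_one {n : ℕ} (hn : ¬ p ∣ n) : padicValuation p n = 1 := by
  exact_mod_cast Int.padicValuation_eq_one_iff.mpr (Int.natCast_dvd_natCast.not.mpr hn)

lemma Rat.padicValuation_one_div_natCast {c : ℕ} (hc : ¬ p ∣ c) : padicValuation p (1 / c) = 1 := by
  rw [map_div₀, map_one, padicValuation_natCast_eq_one hc, div_one]

lemma Rat.padicValuation_intCast_le_pow_iff (n : ℤ) (k : ℕ) :
    padicValuation p n ≤ padicValuation p p ^ k ↔ (p : ℤ) ^ k ∣ n := by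
  rcases eq_or_ne n 0 with rfl | hn
  · simp
  rw [padicValInt_dvd_iff]
  simp [Rat.padicValuation, hn, hp.out.ne_zero, ← WithZero.exp_nsmul, -WithZero.exp_neg]

lemma Rat.exists_eq_pow_mul_div_iff (x : ℚ) (k : ℕ) :
    (∃ a b : ℤ, ¬ (p : ℤ) ∣ b ∧ x = p ^ k * (a / b))
      ↔ padicValuation p x ≤ padicValuation p p ^ k := by
  constructor
  · rintro ⟨a, b, hb, rfl⟩
    rw [map_mul, map_pow, map_div₀, padicValuation_cast, padicValuation_cast,
      Int.padicValuation_eq_one_iff.mpr hb, div_one]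
    exact mul_le_of_le_one_right' (Int.padicValuation_le_one p a)
  · intro h
    set q := x / p ^ k with hq
    have hq1 : padicValuation p q ≤ 1 := by
      rw [map_div₀, map_pow]
      exact div_le_one_of_le₀ h zero_le
    refine ⟨q.num, q.den, by exact_mod_cast padicValuation_le_one_iff.mp hq1, ?_⟩
    rw [Int.cast_natCast, num_div_den, hq, mul_div_cancel₀ _ (by simp [hp.out.ne_zero])]

lemma padicValuation_two_pow_sub_two_le : padicValuation p (2 ^ p - 2) ≤ padicValuation p p := by
  have h := (padicValuation_intCast_le_pow_iff (p := p) (2 ^ p - 2) 1).mpr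
    (by simpa using Int.prime_dvd_pow_self_sub hp.out 2)
  simpa using h

end PadicValuation

section Bernoulli

variable {p : ℕ} [hp : Fact p.Prime]

lemma padicValuation_bernoulli_le_one {k : ℕ} (hk : k + 1 < p) :
    padicValuation p (bernoulli k) ≤ 1 := by
  induction k using Nat.strong_induction_on with
  | _ k ih =>
    rcases eq_or_ne k 0 with rfl | hk0
    · simp
    have hunit : padicValuation p ((k + 1 : ℕ) : ℚ) = 1 :=
      padicValuation_natCast_eq_one (Nat.not_dvd_of_pos_of_lt k.succ_pos hk)
    calc padicValuation p (bernoulli k)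
        = padicValuation p (((k + 1 : ℕ) : ℚ) * bernoulli k) := by rw [map_mul, hunit, one_mul]
      _ = padicValuation p (∑ i ∈ range k, ((k + 1).choose i : ℚ) * bernoulli i) := by
        rw [natCast_succ_mul_bernoulli hk0, Valuation.map_neg]
      _ ≤ 1 := (padicValuation p).map_sum_le fun i hi => by
        have hi' := mem_range.mp hi
        rw [map_mul]
        exact mul_le_one' (padicValuation_natCast_le_one _) (ih i hi' (by omega))

lemma padicValuation_prime_mul_bernoulli_le_one :
    padicValuation p (p * bernoulli (p - 1)) ≤ 1 := by
  have h := natCast_succ_mul_bernoulli (k := p - 1) (by have := hp.out.two_le; omega)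
  rw [Nat.sub_add_cancel hp.out.one_le] at h
  rw [h, Valuation.map_neg]
  refine (padicValuation p).map_sum_le fun i hi => ?_
  have hi' := mem_range.mp hi
  rw [map_mul]
  exact mul_le_one' (padicValuation_natCast_le_one _) (padicValuation_bernoulli_le_one (by omega))

lemma padicValuation_sum_range_pow_sub_sum_Icc_pow_le (hp2 : p ≠ 2) {c N : ℕ} (hc : ¬ p ∣ c)
    (hN : c * N + 1 = p ^ 2) :
    padicValuation p (∑ j ∈ range N, (1 / (c : ℚ) + j) ^ (p - 1) - ∑ a ∈ Icc 1 N, (a : ℚ) ^ (p - 1))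
      ≤ padicValuation p p ^ 2 := by
  have hshift : 1 / (c : ℚ) + N = p ^ 2 / c := by
    exact_mod_cast one_div_add_natCast_eq_div (by rintro rfl; exact hc (dvd_zero p)) hN
  have hsmall : padicValuation p ((p : ℚ) ^ 2 / c) = padicValuation p p ^ 2 := by
    rw [div_eq_mul_one_div, map_mul, padicValuation_one_div_natCast hc, mul_one, map_pow]
  have hIcc : ∑ a ∈ Icc 1 N, (a : ℚ) ^ (p - 1) = ∑ j ∈ range N, ((j + 1 : ℕ) : ℚ) ^ (p - 1) := by
    rw [range_eq_Ico, sum_Ico_add' (fun a : ℕ => (a : ℚ) ^ (p - 1))]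
    rfl
  rw [← sum_range_reflect, hIcc, ← sum_sub_distrib]
  refine (padicValuation p).map_sum_le fun j hj => ?_
  have hj' := mem_range.mp hj
  have hterm : 1 / (c : ℚ) + ((N - 1 - j : ℕ) : ℚ) = -((j + 1 : ℕ) - (p : ℚ) ^ 2 / c) := by
    rw [Nat.cast_sub (by omega), Nat.cast_sub (by omega)]
    push_cast
    linear_combination hshift
  rw [hterm, (hp.out.even_sub_one hp2).neg_pow]
  refine ((padicValuation p).map_pow_sub_pow_le ?_ (padicValuation_natCast_le_one _) _).trans ?_
  · exact (padicValuation p).map_sub_le (padicValuation_natCast_le_one _)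
      (hsmall.trans_le (pow_le_one' (padicValuation_natCast_le_one _) _))
  · rw [sub_sub_cancel_left, Valuation.map_neg, hsmall]

lemma padicValuation_bernoulli_eval_one_div_sub_le (hp2 : p ≠ 2) {c N : ℕ} (hc : ¬ p ∣ c)
    (hN : c * N + 1 = p ^ 2) :
    padicValuation p ((Polynomial.bernoulli p).eval (1 / (c : ℚ))
      - (Polynomial.bernoulli p).eval ((p : ℚ) ^ 2 / c) + p * ∑ a ∈ Icc 1 N, (a : ℚ) ^ (p - 1))
      ≤ padicValuation p p ^ 3 := by
  have hshift : 1 / (c : ℚ) + N = p ^ 2 / c := by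
    exact_mod_cast one_div_add_natCast_eq_div (by rintro rfl; exact hc (dvd_zero p)) hN
  have hrearrange (b s t : ℚ) : b - (b + p * s) + p * t = -(p * (s - t)) := by ring
  rw [← hshift, Polynomial.bernoulli_eval_add_natCast, hrearrange, Valuation.map_neg, map_mul,
    pow_succ']
  exact mul_le_mul_right (padicValuation_sum_range_pow_sub_sum_Icc_pow_le hp2 hc hN) _

lemma padicValuation_bernoulli_eval_sq_mul_sub_le (hp2 : p ≠ 2) {y : ℚ}
    (hy : padicValuation p y ≤ 1) :
    padicValuation p ((Polynomial.bernoulli p).eval (p ^ 2 * y)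
      - p * bernoulli (p - 1) * (p ^ 2 * y)) ≤ padicValuation p p ^ 3 := by
  have hp3 : 3 ≤ p := by have := hp.out.two_le; omega
  have hB : bernoulli p = 0 := bernoulli_eq_zero_of_odd (hp.out.odd_of_ne_two hp2) (by omega)
  have hchoose : p.choose (p - 1) = p := by
    rw [Nat.choose_symm hp.out.one_le, Nat.choose_one_right]
  rw [Polynomial.bernoulli_eval_eq_sum, show p + 1 = p - 1 + 1 + 1 by omega, sum_range_succ,
    sum_range_succ, Nat.sub_add_cancel hp.out.one_le, hB, hchoose, Nat.sub_sub_self hp.out.one_le,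
    zero_mul, zero_mul, add_zero, pow_one, mul_comm (bernoulli _) (p : ℚ), add_sub_cancel_right]
  refine (padicValuation p).map_sum_le fun i hi => ?_
  have hi' := mem_range.mp hi
  rw [map_mul, map_mul, mul_pow, map_mul, map_pow, map_pow, map_pow, ← pow_mul]
  calc _ ≤ 1 * 1 * (padicValuation p p ^ (2 * (p - i)) * 1) := by
        gcongr
        · exact padicValuation_bernoulli_le_one (by omega)
        · exact padicValuation_natCast_le_one _
        · exact pow_le_one' hy _
    _ ≤ padicValuation p p ^ 3 := by
        rw [one_mul, one_mul, mul_one]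
        exact pow_le_pow_right_of_le_one' (padicValuation_natCast_le_one _) (by omega)

lemma padicValuation_bernoulli_eval_sq_div_sub_two_pow_mul_le (hp2 : p ≠ 2) {c : ℕ}
    (hc : ¬ p ∣ 2 * c) :
    padicValuation p ((Polynomial.bernoulli p).eval ((p : ℚ) ^ 2 / c)
      - 2 ^ p * (Polynomial.bernoulli p).eval ((p : ℚ) ^ 2 / (2 * c)))
      ≤ padicValuation p p ^ 3 := by
  set y : ℚ := 1 / (2 * c)
  have hy : padicValuation p y ≤ 1 := by
    have := padicValuation_one_div_natCast hc
    push_cast at this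
    exact this.le
  have h2y : (p : ℚ) ^ 2 / c = p ^ 2 * (2 * y) := by
    simp only [y]
    field_simp
  have hy' : (p : ℚ) ^ 2 / (2 * c) = p ^ 2 * y := by
    simp only [y]
    field_simp
  have hsplit (B : ℚ → ℚ) : B (p ^ 2 * (2 * y)) - 2 ^ p * B (p ^ 2 * y)
      = (B (p ^ 2 * (2 * y)) - p * bernoulli (p - 1) * (p ^ 2 * (2 * y)))
        - 2 ^ p * (B (p ^ 2 * y) - p * bernoulli (p - 1) * (p ^ 2 * y))
        - p * bernoulli (p - 1) * (p ^ 2 * y * (2 ^ p - 2)) := by ring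
  have h2 : padicValuation p (2 : ℚ) ≤ 1 := by
    exact_mod_cast padicValuation_natCast_le_one (p := p) 2
  rw [h2y, hy', hsplit fun x => (Polynomial.bernoulli p).eval x]
  refine (padicValuation p).map_sub_le ((padicValuation p).map_sub_le
    (padicValuation_bernoulli_eval_sq_mul_sub_le hp2 (by rw [map_mul]; exact mul_le_one' h2 hy))
      ?_) ?_
  · rw [map_mul, map_pow]
    exact mul_le_of_le_one_left' (pow_le_one' h2 _)
      |>.trans (padicValuation_bernoulli_eval_sq_mul_sub_le hp2 hy)
  · rw [map_mul]
    refine mul_le_of_le_one_left' padicValuation_prime_mul_bernoulli_le_one |>.trans ?_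
    rw [map_mul, map_mul, map_pow, pow_succ _ 2]
    exact mul_le_mul' (mul_le_of_le_one_right' hy) padicValuation_two_pow_sub_two_le

lemma padicValuation_bernoulli_eval_one_div_sub_two_pow_mul_sub_le (hp2 : p ≠ 2) {m N : ℕ}
    (hm : ¬ p ∣ 2 * m) (hN : 2 * m * N + 1 = p ^ 2) (hT : p ∣ ∑ a ∈ Icc 1 N, a ^ (p - 1)) :
    padicValuation p ((Polynomial.bernoulli p).eval (1 / (m : ℚ))
      - 2 ^ p * (Polynomial.bernoulli p).eval (1 / (2 * m : ℚ))
      - p * (2 * ∑ a ∈ Icc 1 N, (a : ℚ) ^ (p - 1) - ∑ a ∈ Icc 1 (2 * N), (a : ℚ) ^ (p - 1)))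
      ≤ padicValuation p p ^ 3 := by
  have h₁ := padicValuation_bernoulli_eval_one_div_sub_le (N := 2 * N) hp2
    (fun h => hm (h.mul_left 2)) (by rw [← hN]; ring)
  have h₂ := padicValuation_bernoulli_eval_one_div_sub_le hp2 hm hN
  push_cast at h₂
  have hT' : padicValuation p (∑ a ∈ Icc 1 N, (a : ℚ) ^ (p - 1)) ≤ padicValuation p p := by
    have := (padicValuation_intCast_le_pow_iff (p := p) (∑ a ∈ Icc 1 N, a ^ (p - 1) : ℕ) 1).mpr
      (by simpa using Int.natCast_dvd_natCast.mpr hT)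
    simpa using this
  have h2pow : padicValuation p ((2 : ℚ) ^ p) ≤ 1 := by
    exact_mod_cast padicValuation_natCast_le_one (p := p) (2 ^ p)
  set T₁ := ∑ a ∈ Icc 1 (2 * N), (a : ℚ) ^ (p - 1)
  set T₂ := ∑ a ∈ Icc 1 N, (a : ℚ) ^ (p - 1)
  set B := fun x => (Polynomial.bernoulli p).eval x
  have hsplit : B (1 / m) - 2 ^ p * B (1 / (2 * m)) - p * (2 * T₂ - T₁)
      = (B (1 / m) - B (p ^ 2 / m) + p * T₁)
        - 2 ^ p * (B (1 / (2 * m)) - B (p ^ 2 / (2 * m)) + p * T₂)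
        + (B (p ^ 2 / m) - 2 ^ p * B (p ^ 2 / (2 * m))) + p * ((2 ^ p - 2) * T₂) := by ring
  rw [hsplit]
  refine (padicValuation p).map_add_le ((padicValuation p).map_add_le
    ((padicValuation p).map_sub_le h₁ ?_)
    (padicValuation_bernoulli_eval_sq_div_sub_two_pow_mul_le hp2 hm)) ?_
  · rw [map_mul]
    exact mul_le_of_le_one_left' h2pow |>.trans h₂
  · rw [map_mul, map_mul, pow_succ', pow_two]
    exact mul_le_mul_right (mul_le_mul' padicValuation_two_pow_sub_two_le hT') _

end Bernoulli

/-- For `m ≥ 1` and a prime `p ≡ 1 (mod 2m)`: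
`(((p²−1)/m)_p!)^(p−1) ≡ (((p²−1)/(2m))_p!)^(2(p−1)) (mod p²)` if and only if
`B_p(1/m) − 2^p·B_p(1/(2m)) ≡ 0 (mod p³)` as a rational number. -/
theorem gauss_factorial_iff_bernoulli (m p : ℕ) (hm : 0 < m) (hp : p.Prime)
    (hmod : p % (2 * m) = 1) :
    (∏ a ∈ (Finset.Icc 1 ((p ^ 2 - 1) / m)).filter (fun a => ¬ p ∣ a), a) ^ (p - 1)
        ≡ (∏ a ∈ (Finset.Icc 1 ((p ^ 2 - 1) / (2 * m))).filter (fun a => ¬ p ∣ a), a)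
          ^ (2 * (p - 1)) [MOD p ^ 2] ↔
    ∃ a b : ℤ, ¬ (p : ℤ) ∣ b ∧
      (Polynomial.bernoulli p).eval (1 / (m : ℚ))
          - 2 ^ p * (Polynomial.bernoulli p).eval (1 / (2 * m : ℚ))
        = (p : ℚ) ^ 3 * ((a : ℚ) / (b : ℚ)) := by
  have := Fact.mk hp
  obtain ⟨k, hpk⟩ : ∃ k, p = 2 * m * k + 1 :=
    ⟨p / (2 * m), by have := Nat.div_add_mod p (2 * m); omega⟩
  have hk : 0 < k := Nat.pos_of_ne_zero fun hk => hp.ne_one (by simpa [hk] using hpk)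
  have hmp : 2 * m < p := by nlinarith
  have hkp : 2 * k < p := by nlinarith
  have hp2 : p ≠ 2 := by omega
  have hsq : 2 * m * (k * (p + 1)) + 1 = p ^ 2 := by rw [hpk]; ring
  have hN₂ := sub_one_div_eq_of_mul_add_one_eq (by omega) hsq
  have hN₁ := sub_one_div_eq_of_mul_add_one_eq (n := p ^ 2) (N := 2 * (k * (p + 1))) hm
    (by rw [← hsq]; ring)
  have hdiv : 2 * (k * (p + 1)) / p = 2 * (k * (p + 1) / p) := by
    rw [← mul_assoc, mul_add_one_div_self hkp, mul_add_one_div_self (by omega)]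
  have hT : p ∣ ∑ a ∈ Icc 1 (k * (p + 1)), a ^ (p - 1) := prime_dvd_sum_pow hp2 <| by
    rw [mul_add_one_div_self (by omega), mul_add_one, Nat.add_sub_cancel]
    exact dvd_mul_left p k
  rw [hN₁, hN₂, gaussFactorial_pow_modEq_iff hp2 hdiv, Rat.exists_eq_pow_mul_div_iff,
    (padicValuation p).map_le_iff_of_map_sub_le
      (padicValuation_bernoulli_eval_one_div_sub_two_pow_mul_sub_le hp2
        (Nat.not_dvd_of_pos_of_lt (by omega) hmp) hsq hT),
    Nat.modEq_iff_dvd, map_mul, pow_succ' _ 2, mul_le_mul_iff_right₀ (by simp),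
    Nat.cast_pow, ← Rat.padicValuation_intCast_le_pow_iff]
  push_cast
  rfl
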